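/- arXiv:1301.5038 — 10 statements merged into one kernel-verified Lean document; each statement's English description precedes it below -/
import Mathlib

section
/- Let E be a field of characteristic zero and let K = k1/k2 ∈ E(y) with gcd(k1,k2)=1 be differential-reduced (i.e., gcd(k2, k1 - i·D(k2)) = 1 for every integer i, where D = d/dy). If g ∈ E(y) satisfies k2·D(g) + k1·g ∈ E[y], then g is a polynomial, i.e., g ∈ E[y]. -/
open Polynomial

/-- `K = k1/k2` is differential-reduced: `gcd(k2, k1 - i·D(k2)) = 1` for all integers `i`. -/
def DiffReduced {E : Type*} [Field E] (k1 k2 : E[X]) : Prop :=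
  ∀ i : ℤ, IsCoprime k2 (k1 - (i : E[X]) * derivative k2)

/-- The derivation `d/dy` on the field of rational functions `E(y)`. -/
noncomputable def Dr {E : Type*} [Field E] (f : RatFunc E) : RatFunc E :=
  (algebraMap E[X] (RatFunc E) (derivative f.num) * algebraMap E[X] (RatFunc E) f.denom -
      algebraMap E[X] (RatFunc E) f.num * algebraMap E[X] (RatFunc E) (derivative f.denom)) /
    (algebraMap E[X] (RatFunc E) f.denom) ^ 2

/-!
Write `g = a / b` in lowest terms and let an irreducible `q` divide `b` exactly `n + 1` times,
`b = q ^ (n + 1) * c`. Clearing denominators gives `k2 (a' b - a b') + k1 a b = p b²`. Since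
`b' = q ^ n w` with `q ∤ w` (`q` is separable and `n + 1 ≠ 0` in characteristic zero), the only term
not divisible by `q ^ (n + 1)` is `k2 a b'`, which forces `q ∣ k2`. Writing `k2 = q u` and looking
once more modulo `q` gives `q ∣ k1 - (n + 1) u q' ≡ k1 - (n + 1) k2'`, so `q` divides both `k2` and
`k1 - (n + 1) k2'`, against differential-reducedness at `i = n + 1`.
-/

theorem derivative_pow_succ_mul {R : Type*} [CommSemiring R] (q c : R[X]) (n : ℕ) :
    derivative (q ^ (n + 1) * c) =
      q ^ n * ((n + 1 : ℕ) * derivative q * c + q * derivative c) := by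
  rw [derivative_mul, derivative_pow_succ, ← C_eq_natCast, Nat.cast_succ]
  ring

theorem num_denom_eq_of_mul_Dr_add_mul_eq_algebraMap {E : Type*} [Field E] {k1 k2 p : E[X]}
    {g : RatFunc E}
    (h : algebraMap E[X] (RatFunc E) k2 * Dr g + algebraMap E[X] (RatFunc E) k1 * g =
      algebraMap E[X] (RatFunc E) p) :
    k2 * (derivative g.num * g.denom - g.num * derivative g.denom) + k1 * (g.num * g.denom) =
      p * g.denom ^ 2 := by
  set φ := algebraMap E[X] (RatFunc E)
  have hb : φ g.denom ≠ 0 := RatFunc.algebraMap_ne_zero g.denom_ne_zero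
  have hg : φ g.num = g * φ g.denom := (div_eq_iff hb).mp (RatFunc.num_div_denom g)
  have hDg : Dr g * φ g.denom ^ 2 =
      φ (derivative g.num) * φ g.denom - φ g.num * φ (derivative g.denom) :=
    div_mul_cancel₀ _ (pow_ne_zero 2 hb)
  apply RatFunc.algebraMap_injective E
  simp only [map_add, map_mul, map_sub, map_pow]
  linear_combination φ g.denom ^ 2 * h - φ k2 * hDg + φ k1 * φ g.denom * hg

theorem exists_irreducible_pow_succ_mul {α : Type*} [CommMonoidWithZero α] [WfDvdMonoid α]
    {b : α} (hb0 : b ≠ 0) (hb : ¬IsUnit b) :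
    ∃ (q : α) (n : ℕ) (c : α), Irreducible q ∧ ¬q ∣ c ∧ b = q ^ (n + 1) * c := by
  obtain ⟨q, hq, hqb⟩ := WfDvdMonoid.exists_irreducible_factor hb hb0
  obtain ⟨m, c, hqc, rfl⟩ := WfDvdMonoid.max_power_factor hb0 hq
  obtain ⟨n, rfl⟩ : ∃ n, m = n + 1 := by
    refine Nat.exists_eq_add_one.mpr (Nat.pos_of_ne_zero ?_)
    rintro rfl
    exact hqc (by simpa using hqb)
  exact ⟨q, n, c, hq, hqc, rfl⟩

section IrreducibleFactor

variable {E : Type*} [Field E] [CharZero E] {q a c k1 k2 p : E[X]} {n : ℕ}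

theorem Irreducible.not_dvd_derivative (hq : Irreducible q) : ¬q ∣ derivative q := fun h =>
  hq.not_isUnit (hq.separable.isUnit_of_dvd' dvd_rfl h)

theorem Irreducible.not_dvd_natCast (hq : Irreducible q) {m : ℕ} (hm : m ≠ 0) :
    ¬q ∣ (m : E[X]) := fun h =>
  hq.not_isUnit (isUnit_of_dvd_unit h (by
    rw [← C_eq_natCast]
    exact isUnit_C.mpr (isUnit_iff_ne_zero.mpr (Nat.cast_ne_zero.mpr hm))))

theorem Irreducible.not_dvd_succ_mul_derivative_mul_add (hq : Irreducible q) (hc : ¬q ∣ c) :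
    ¬q ∣ (n + 1 : ℕ) * derivative q * c + q * derivative c := by
  rw [dvd_add_left (dvd_mul_right q _)]
  simp only [hq.prime.dvd_mul, not_or]
  exact ⟨⟨hq.not_dvd_natCast n.succ_ne_zero, hq.not_dvd_derivative⟩, hc⟩

theorem Irreducible.dvd_and_dvd_sub_succ_mul_derivative (hq : Irreducible q) (hc : ¬q ∣ c)
    (ha : ¬q ∣ a)
    (hkey : k2 * (derivative a * (q ^ (n + 1) * c) - a * derivative (q ^ (n + 1) * c)) +
        k1 * (a * (q ^ (n + 1) * c)) = p * (q ^ (n + 1) * c) ^ 2) :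
    q ∣ k2 ∧ q ∣ k1 - (n + 1 : ℕ) * derivative k2 := by
  rw [derivative_pow_succ_mul] at hkey
  set w := (n + 1 : ℕ) * derivative q * c + q * derivative c with hw_def
  have hw : ¬q ∣ w := hq.not_dvd_succ_mul_derivative_mul_add hc
  have hred :
      k2 * a * w = q * (k2 * derivative a * c + k1 * (a * c) - p * (q ^ (n + 1) * c ^ 2)) :=
    mul_left_cancel₀ (pow_ne_zero n hq.ne_zero) (by linear_combination -hkey)
  obtain ⟨u, rfl⟩ : q ∣ k2 := by
    have h : q ∣ k2 * a * w := ⟨_, hred⟩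
    rcases hq.prime.dvd_mul.mp h with h | h
    · exact (hq.prime.dvd_or_dvd h).resolve_right ha
    · exact absurd h hw
  refine ⟨dvd_mul_right q u, ?_⟩
  have hred' :
      u * a * w = q * u * derivative a * c + k1 * (a * c) - p * (q ^ (n + 1) * c ^ 2) :=
    mul_left_cancel₀ hq.ne_zero (by linear_combination hred)
  -- modulo `q`, `w ≡ (n + 1) q' c`, so `hred'` reads `a c ((n + 1) u q' - k1) ≡ 0`
  have hac : q ∣ a * c * (k1 - (n + 1 : ℕ) * u * derivative q) :=
    ⟨p * (q ^ n * c ^ 2) + u * a * derivative c - u * derivative a * c, by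
      rw [hw_def] at hred'; linear_combination -hred'⟩
  have hu : q ∣ k1 - (n + 1 : ℕ) * u * derivative q := by
    rcases hq.prime.dvd_mul.mp hac with h | h
    · rcases hq.prime.dvd_mul.mp h with h | h
      · exact absurd h ha
      · exact absurd h hc
    · exact h
  have hsplit : k1 - (n + 1 : ℕ) * derivative (q * u) =
      (k1 - (n + 1 : ℕ) * u * derivative q) - q * ((n + 1 : ℕ) * derivative u) := by
    rw [derivative_mul]; ring
  rw [hsplit]
  exact dvd_sub hu (dvd_mul_right q _)

end IrreducibleFactor

theorem stmt_0_general {E : Type*} [Field E] [CharZero E] (k1 k2 : E[X])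
    (hdr : DiffReduced k1 k2) (g : RatFunc E)
    (h : ∃ p : E[X],
      algebraMap E[X] (RatFunc E) k2 * Dr g + algebraMap E[X] (RatFunc E) k1 * g =
        algebraMap E[X] (RatFunc E) p) :
    ∃ q : E[X], g = algebraMap E[X] (RatFunc E) q := by
  obtain ⟨p, hp⟩ := h
  suffices hb : IsUnit g.denom by
    have hg := RatFunc.num_div_denom g
    rw [(RatFunc.monic_denom g).eq_one_of_isUnit hb, map_one, div_one] at hg
    exact ⟨g.num, hg.symm⟩
  by_contra hb
  obtain ⟨q, n, c, hq, hqc, hbq⟩ := exists_irreducible_pow_succ_mul g.denom_ne_zero hb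
  have hqb : q ∣ g.denom := hbq ▸ dvd_mul_of_dvd_left (dvd_pow_self q n.succ_ne_zero) c
  have hqa : ¬q ∣ g.num := fun hqa =>
    hq.not_isUnit ((RatFunc.isCoprime_num_denom g).isUnit_of_dvd' hqa hqb)
  have hkey := num_denom_eq_of_mul_Dr_add_mul_eq_algebraMap hp
  rw [hbq] at hkey
  obtain ⟨hk2, hk1⟩ := hq.dvd_and_dvd_sub_succ_mul_derivative hqc hqa hkey
  exact hq.not_isUnit ((hdr (n + 1)).isUnit_of_dvd' hk2 (by exact_mod_cast hk1))

theorem stmt_0 {E : Type*} [Field E] [CharZero E] (k1 k2 : E[X]) (hk2 : k2 ≠ 0)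
    (hcop : IsCoprime k1 k2) (hdr : DiffReduced k1 k2) (g : RatFunc E)
    (h : ∃ p : E[X],
      algebraMap E[X] (RatFunc E) k2 * Dr g + algebraMap E[X] (RatFunc E) k1 * g =
        algebraMap E[X] (RatFunc E) p) :
    ∃ q : E[X], g = algebraMap E[X] (RatFunc E) q :=
  stmt_0_general k1 k2 hdr g h
end

section
/- Let K = k1/k2 ∈ E(y) be a nonzero differential-reduced rational function with gcd(k1,k2)=1. Then the E-linear map φ_K : E[y] → E[y] sending p to k2·D(p) + k1·p is injective. -/
/-!
If `k2 p' + k1 p = 0` with `p ≠ 0`, then `k2 ∣ k1 p`, so `k2 ∣ p` because `k1` and `k2` are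
coprime. Writing `p = k2 q` turns the equation into `k2 q' + (k1 + k2') q = 0`, and `k1 + k2'` over
`k2` is again differential-reduced, so the argument repeats with `q`, of smaller degree as long as
`k2` is not a unit. For a unit `k2` the equation gives `p ∣ p'`, hence `p' = 0` and `k1 p = 0`.
-/

open Polynomial

section

variable {R : Type*} [CommRing R] [IsDomain R] {k1 k2 p : R[X]}

theorem eq_zero_of_isUnit_of_mul_derivative_add_mul_eq_zero (hk1 : k1 ≠ 0)
    (hk2 : IsUnit k2) (h : k2 * derivative p + k1 * p = 0) : p = 0 := by
  have hdvd : p ∣ derivative p := by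
    rw [← hk2.dvd_mul_left]
    exact ⟨-k1, by linear_combination h⟩
  rw [dvd_derivative_iff.mp hdvd, mul_zero, zero_add] at h
  exact (mul_eq_zero.mp h).resolve_left hk1

theorem exists_eq_mul_of_mul_derivative_add_mul_eq_zero (hcop : IsCoprime k1 k2) (hk2 : k2 ≠ 0)
    (h : k2 * derivative p + k1 * p = 0) :
    ∃ q, p = k2 * q ∧ k2 * derivative q + (k1 + derivative k2) * q = 0 := by
  obtain ⟨q, rfl⟩ : k2 ∣ p :=
    hcop.symm.dvd_of_dvd_mul_left ⟨-derivative p, by linear_combination h⟩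
  refine ⟨q, rfl, (mul_eq_zero.mp ?_).resolve_left hk2⟩
  rw [derivative_mul] at h
  linear_combination h

end

namespace DiffReduced

variable {E : Type*} [Field E] {k1 k2 : E[X]}

theorem isCoprime (hdr : DiffReduced k1 k2) : IsCoprime k1 k2 := by
  simpa using (hdr 0).symm

theorem add_derivative (hdr : DiffReduced k1 k2) : DiffReduced (k1 + derivative k2) k2 := by
  intro i
  convert hdr (i - 1) using 1
  push_cast
  ring

theorem add_derivative_ne_zero (hdr : DiffReduced k1 k2) (hk2 : ¬IsUnit k2) :
    k1 + derivative k2 ≠ 0 := by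
  intro h
  exact hk2 (isCoprime_zero_left.mp (h ▸ hdr.add_derivative.isCoprime))

end DiffReduced

theorem DiffReduced.eq_zero_of_mul_derivative_add_mul_eq_zero {E : Type*} [Field E]
    {k1 k2 p : E[X]} (hk1 : k1 ≠ 0) (hdr : DiffReduced k1 k2)
    (h : k2 * derivative p + k1 * p = 0) : p = 0 := by
  rcases eq_or_ne k2 0 with rfl | hk2
  · simpa [hk1] using h
  by_cases hu : IsUnit k2
  · exact eq_zero_of_isUnit_of_mul_derivative_add_mul_eq_zero hk1 hu h
  obtain ⟨q, hpq, hq⟩ := exists_eq_mul_of_mul_derivative_add_mul_eq_zero hdr.isCoprime hk2 h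
  rcases eq_or_ne q 0 with hq0 | hq0
  · rw [hpq, hq0, mul_zero]
  have hdeg : q.natDegree < p.natDegree := by
    rw [hpq, natDegree_mul hk2 hq0, Nat.lt_add_left_iff_pos]
    exact natDegree_pos_iff_degree_pos.mpr (degree_pos_of_ne_zero_of_nonunit hk2 hu)
  exact absurd (DiffReduced.eq_zero_of_mul_derivative_add_mul_eq_zero
    (hdr.add_derivative_ne_zero hu) hdr.add_derivative hq) hq0
termination_by p.natDegree

theorem stmt_1_general {E : Type*} [Field E] (k1 k2 : E[X]) (hk1 : k1 ≠ 0)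
    (hdr : DiffReduced k1 k2) :
    Function.Injective fun p : E[X] => k2 * derivative p + k1 * p := by
  intro p q h
  rw [← sub_eq_zero]
  refine hdr.eq_zero_of_mul_derivative_add_mul_eq_zero hk1 ?_
  rw [derivative_sub]
  linear_combination h

theorem stmt_1 {E : Type*} [Field E] [CharZero E] (k1 k2 : E[X]) (hk1 : k1 ≠ 0)
    (hk2 : k2 ≠ 0) (hcop : IsCoprime k1 k2) (hdr : DiffReduced k1 k2) :
    Function.Injective fun p : E[X] => k2 * derivative p + k1 * p :=
  stmt_1_general k1 k2 hk1 hdr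
end

section
/- Let K = k1/k2 be nonzero differential-reduced with d1 = deg k1 ≥ d2 = deg k2. Then for every p ∈ E[y], deg(k2·D(p) + k1·p) = d1 + deg p, and its leading coefficient is lc(k1)·lc(p). -/
open Polynomial

section

variable {R : Type*} [Semiring R] [NoZeroDivisors R] {a b p : R[X]}

theorem degree_mul_derivative_lt_degree_mul (hb : b ≠ 0) (hp : p ≠ 0)
    (hab : a.natDegree ≤ b.natDegree) : (a * derivative p).degree < (b * p).degree := by
  rcases eq_or_ne a 0 with rfl | ha0
  · simpa [bot_lt_iff_ne_bot] using mul_ne_zero hb hp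
  have ha : a.degree ≤ b.degree := by
    rw [degree_eq_natDegree hb]
    exact degree_le_natDegree.trans (by exact_mod_cast hab)
  calc (a * derivative p).degree ≤ a.degree + (derivative p).degree := degree_mul_le _ _
    _ < b.degree + p.degree :=
        WithBot.add_lt_add_of_le_of_lt (degree_ne_bot.2 ha0) ha (degree_derivative_lt hp)
    _ = (b * p).degree := degree_mul.symm

theorem natDegree_mul_derivative_add_mul (hb : b ≠ 0) (hp : p ≠ 0)
    (hab : a.natDegree ≤ b.natDegree) :
    (a * derivative p + b * p).natDegree = b.natDegree + p.natDegree := by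
  rw [natDegree_eq_of_degree_eq
      (degree_add_eq_right_of_degree_lt (degree_mul_derivative_lt_degree_mul hb hp hab)),
    natDegree_mul hb hp]

theorem leadingCoeff_mul_derivative_add_mul (hb : b ≠ 0) (hp : p ≠ 0)
    (hab : a.natDegree ≤ b.natDegree) :
    (a * derivative p + b * p).leadingCoeff = b.leadingCoeff * p.leadingCoeff := by
  rw [leadingCoeff_add_of_degree_lt (degree_mul_derivative_lt_degree_mul hb hp hab),
    leadingCoeff_mul]

end

theorem stmt_2_general {E : Type*} [Field E] (k1 k2 : E[X]) (hk1 : k1 ≠ 0)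
    (hdeg : k2.natDegree ≤ k1.natDegree) (p : E[X]) (hp : p ≠ 0) :
    (k2 * derivative p + k1 * p).natDegree = k1.natDegree + p.natDegree ∧
      (k2 * derivative p + k1 * p).leadingCoeff = k1.leadingCoeff * p.leadingCoeff :=
  ⟨natDegree_mul_derivative_add_mul hk1 hp hdeg, leadingCoeff_mul_derivative_add_mul hk1 hp hdeg⟩

theorem stmt_2 {E : Type*} [Field E] [CharZero E] (k1 k2 : E[X]) (hk1 : k1 ≠ 0)
    (hk2 : k2 ≠ 0) (hcop : IsCoprime k1 k2) (hdr : DiffReduced k1 k2)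
    (hdeg : k2.natDegree ≤ k1.natDegree) (p : E[X]) (hp : p ≠ 0) :
    (k2 * derivative p + k1 * p).natDegree = k1.natDegree + p.natDegree ∧
      (k2 * derivative p + k1 * p).leadingCoeff = k1.leadingCoeff * p.leadingCoeff :=
  stmt_2_general k1 k2 hk1 hdeg p hp
end

section
/- Let K = k1/k2 be nonzero differential-reduced with d1 = deg k1, d2 = deg k2 and d1 = d2 − 1. If −lc(k1)/lc(k2) is not a positive integer, then for every nonzero p ∈ E[y], deg(k2·D(p) + k1·p) = d1 + deg p. -/
open Polynomial

/-!
The coefficient of `y ^ (deg k1 + deg p)` in `k2 D(p) + k1 p` is `lc(p) (lc(k2) deg p + lc(k1))`,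
and no monomial of higher degree occurs since `deg k2 = deg k1 + 1`. This coefficient vanishes
only if `-lc(k1)/lc(k2) = deg p`, which is excluded for `deg p > 0` by hypothesis and for
`deg p = 0` by `k1 ≠ 0`.
-/

namespace Polynomial

section Semiring

variable {R : Type*} [Semiring R]

theorem coeff_derivative_natDegree_sub_one (p : R[X]) :
    (derivative p).coeff (p.natDegree - 1) = p.leadingCoeff * p.natDegree := by
  rcases Nat.eq_zero_or_pos p.natDegree with h0 | hpos
  · simp [h0, derivative_of_natDegree_zero h0]
  · rw [coeff_derivative, ← Nat.cast_add_one, Nat.sub_add_cancel hpos, leadingCoeff]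

theorem natDegree_mul_derivative_add_mul_le {k1 k2 : R[X]}
    (hdeg : k2.natDegree ≤ k1.natDegree + 1) (p : R[X]) :
    (k2 * derivative p + k1 * p).natDegree ≤ k1.natDegree + p.natDegree := by
  rcases eq_or_ne p.natDegree 0 with h0 | h0
  · rw [derivative_of_natDegree_zero h0, mul_zero, zero_add]
    exact natDegree_mul_le
  · refine natDegree_add_le_of_degree_le (natDegree_mul_le.trans ?_) natDegree_mul_le
    have := natDegree_derivative_le p
    omega

end Semiring

variable {R : Type*} [CommSemiring R]

theorem coeff_mul_derivative_add_mul {k1 k2 : R[X]} (hdeg : k1.natDegree + 1 = k2.natDegree)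
    (p : R[X]) : (k2 * derivative p + k1 * p).coeff (k1.natDegree + p.natDegree) =
      p.leadingCoeff * (k2.leadingCoeff * p.natDegree + k1.leadingCoeff) := by
  rw [coeff_add, coeff_mul_degree_add_degree]
  rcases eq_or_ne p.natDegree 0 with h0 | h0
  · rw [derivative_of_natDegree_zero h0, h0]
    simp only [mul_zero, coeff_zero, Nat.cast_zero, zero_add]
    exact mul_comm _ _
  · rw [show k1.natDegree + p.natDegree = k2.natDegree + (p.natDegree - 1) by omega,
      coeff_mul_add_eq_of_natDegree_le le_rfl (natDegree_derivative_le p),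
      coeff_derivative_natDegree_sub_one, coeff_natDegree]
    ring

end Polynomial

theorem stmt_3_general {E : Type*} [Field E] (k1 k2 : E[X]) (hk1 : k1 ≠ 0)
    (hk2 : k2 ≠ 0)
    (hdeg : k1.natDegree + 1 = k2.natDegree)
    (hτ : ∀ n : ℕ, 0 < n → -(k1.leadingCoeff / k2.leadingCoeff) ≠ (n : E))
    (p : E[X]) (hp : p ≠ 0) :
    (k2 * derivative p + k1 * p).natDegree = k1.natDegree + p.natDegree := by
  have hlc : k2.leadingCoeff * p.natDegree + k1.leadingCoeff ≠ 0 := by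
    rcases Nat.eq_zero_or_pos p.natDegree with h0 | hpos
    · simpa [h0] using hk1
    · intro h
      apply hτ p.natDegree hpos
      field_simp [leadingCoeff_ne_zero.mpr hk2]
      linear_combination -h
  refine natDegree_eq_of_le_of_coeff_ne_zero (natDegree_mul_derivative_add_mul_le hdeg.ge p) ?_
  rw [coeff_mul_derivative_add_mul hdeg]
  exact mul_ne_zero (leadingCoeff_ne_zero.mpr hp) hlc

theorem stmt_3 {E : Type*} [Field E] [CharZero E] (k1 k2 : E[X]) (hk1 : k1 ≠ 0)
    (hk2 : k2 ≠ 0) (hcop : IsCoprime k1 k2) (hdr : DiffReduced k1 k2)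
    (hdeg : k1.natDegree + 1 = k2.natDegree)
    (hτ : ∀ n : ℕ, 0 < n → -(k1.leadingCoeff / k2.leadingCoeff) ≠ (n : E))
    (p : E[X]) (hp : p ≠ 0) :
    (k2 * derivative p + k1 * p).natDegree = k1.natDegree + p.natDegree :=
  stmt_3_general k1 k2 hk1 hk2 hdeg hτ p hp
end

section
/- Let K = k1/k2 be nonzero differential-reduced with d1 = deg k1 < d2 − 1 where d2 = deg k2. Then for every p ∈ E[y] with deg p ≥ 1, deg(k2·D(p) + k1·p) = d2 + deg(p) − 1, and for nonzero constant p, deg(k2·D(p) + k1·p) = d1. -/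
open Polynomial

namespace Polynomial

theorem natDegree_mul_derivative_add_mul_of_natDegree_add_one_lt {R : Type*} [CommRing R]
    [IsDomain R] [CharZero R] {a b p : R[X]} (hab : b.natDegree + 1 < a.natDegree)
    (hp : 1 ≤ p.natDegree) :
    (a * derivative p + b * p).natDegree = a.natDegree + p.natDegree - 1 := by
  have ha : a ≠ 0 := ne_zero_of_natDegree_gt hab
  have hp' : derivative p ≠ 0 := by
    rw [Ne, derivative_eq_zero]
    omega
  have hlead : (a * derivative p).natDegree = a.natDegree + p.natDegree - 1 := by
    rw [natDegree_mul ha hp', natDegree_derivative]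
    omega
  have hlow : (b * p).natDegree < (a * derivative p).natDegree := by
    rw [hlead]
    have := natDegree_mul_le (p := b) (q := p)
    omega
  rw [natDegree_add_eq_left_of_natDegree_lt hlow, hlead]

theorem natDegree_mul_derivative_add_mul_of_natDegree_eq_zero {R : Type*} [Semiring R]
    [NoZeroDivisors R] (a b : R[X]) {p : R[X]} (hp : p ≠ 0) (hp0 : p.natDegree = 0) :
    (a * derivative p + b * p).natDegree = b.natDegree := by
  have hC : p = C (p.coeff 0) := eq_C_of_natDegree_eq_zero hp0
  have hc : p.coeff 0 ≠ 0 := fun h => hp (by rw [hC, h, C_0])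
  rw [derivative_of_natDegree_zero hp0, mul_zero, zero_add, hC, natDegree_mul_C hc]

end Polynomial

theorem stmt_4_general {E : Type*} [Field E] [CharZero E] (k1 k2 : E[X])
    (hdeg : k1.natDegree + 1 < k2.natDegree) (p : E[X]) (hp : p ≠ 0) :
    (1 ≤ p.natDegree →
        (k2 * derivative p + k1 * p).natDegree = k2.natDegree + p.natDegree - 1) ∧
      (p.natDegree = 0 → (k2 * derivative p + k1 * p).natDegree = k1.natDegree) :=
  ⟨natDegree_mul_derivative_add_mul_of_natDegree_add_one_lt hdeg,
    natDegree_mul_derivative_add_mul_of_natDegree_eq_zero k2 k1 hp⟩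

theorem stmt_4 {E : Type*} [Field E] [CharZero E] (k1 k2 : E[X]) (hk1 : k1 ≠ 0)
    (hk2 : k2 ≠ 0) (hcop : IsCoprime k1 k2) (hdr : DiffReduced k1 k2)
    (hdeg : k1.natDegree + 1 < k2.natDegree) (p : E[X]) (hp : p ≠ 0) :
    (1 ≤ p.natDegree →
        (k2 * derivative p + k1 * p).natDegree = k2.natDegree + p.natDegree - 1) ∧
      (p.natDegree = 0 → (k2 * derivative p + k1 * p).natDegree = k1.natDegree) :=
  stmt_4_general k1 k2 hdeg p hp
end

section
/- Let K = k1/k2 be nonzero differential-reduced with d1 = deg k1 ≥ d2 = deg k2 (or d1 = d2 − 1 with −lc(k1)/lc(k2) not a positive integer). Then for every p ∈ E[y] there exists q ∈ E[y] with deg q < d1 such that p − q lies in M_K = { k2·D(w) + k1·w : w ∈ E[y] }. -/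
/-!
The operator `L w = k2 * w' + k1 * w` maps `c * y ^ m` to a polynomial of degree at most
`d1 + m` whose coefficient of `y ^ (d1 + m)` is `(lc k1 + m * [y ^ (d1 + 1)] k2) * c`.
The degree hypothesis makes this indicial factor nonzero for every `m`, so the leading term of
any `p` of degree at least `d1` is cancelled by an element of `M_K`; induction on the degree
leaves a remainder of degree below `d1`.
-/

open Polynomial

namespace Polynomial

section CommRing

variable {R : Type*} [CommRing R]

theorem natDegree_mul_derivative_add_mul_monomial_le {k1 k2 : R[X]}
    (hdeg : k2.natDegree ≤ k1.natDegree + 1) (m : ℕ) (c : R) :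
    (k2 * derivative (monomial m c) + k1 * monomial m c).natDegree ≤ k1.natDegree + m := by
  refine natDegree_add_le_of_degree_le ?_
    (natDegree_mul_le.trans (by grw [natDegree_monomial_le]))
  rcases m with _ | m
  · simp
  · rw [derivative_monomial]
    exact natDegree_mul_le.trans (by grw [natDegree_monomial_le, hdeg]; omega)

theorem coeff_mul_derivative_add_mul_monomial (k1 k2 : R[X]) (m : ℕ) (c : R) :
    (k2 * derivative (monomial m c) + k1 * monomial m c).coeff (k1.natDegree + m) =
      (k1.leadingCoeff + m * k2.coeff (k1.natDegree + 1)) * c := by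
  rw [coeff_add, coeff_mul_monomial, derivative_monomial]
  rcases m with _ | m
  · simp
  · rw [Nat.add_sub_cancel, ← add_assoc, ← Nat.add_right_comm, coeff_mul_monomial, leadingCoeff]
    ring

end CommRing

section Field

variable {K : Type*} [Field K]

theorem exists_degree_lt_sub_eq_mul_derivative_add_mul {k1 k2 : K[X]}
    (hdeg : k2.natDegree ≤ k1.natDegree + 1)
    (hind : ∀ m : ℕ, k1.leadingCoeff + m * k2.coeff (k1.natDegree + 1) ≠ 0) (p : K[X]) :
    ∃ q w : K[X], q.degree < k1.natDegree ∧ p - q = k2 * derivative w + k1 * w := by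
  induction p using degree_lt_wf.induction with
  | _ p ih =>
  by_cases hp : p.degree < k1.natDegree
  · exact ⟨p, 0, hp, by simp⟩
  obtain ⟨m, hm⟩ : ∃ m, p.natDegree = k1.natDegree + m :=
    Nat.exists_eq_add_of_le (le_natDegree_of_coe_le_degree (not_lt.mp hp))
  have hp0 : p ≠ 0 := by rintro rfl; simp at hp
  set w := monomial m (p.leadingCoeff / (k1.leadingCoeff + m * k2.coeff (k1.natDegree + 1)))
  have hcoeff : (k2 * derivative w + k1 * w).coeff p.natDegree = p.leadingCoeff := by
    rw [hm, coeff_mul_derivative_add_mul_monomial, mul_div_cancel₀ _ (hind m)]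
  have hdegree : (k2 * derivative w + k1 * w).degree = p.degree := by
    rw [degree_eq_natDegree hp0]
    refine degree_eq_of_le_of_coeff_ne_zero ?_ (by simpa [hcoeff] using hp0)
    exact degree_le_of_natDegree_le (hm ▸ natDegree_mul_derivative_add_mul_monomial_le hdeg m _)
  have hlt : (p - (k2 * derivative w + k1 * w)).degree < p.degree :=
    degree_sub_lt_left hdegree.symm hp0
      (by rw [← hcoeff, leadingCoeff, natDegree_eq_of_degree_eq hdegree])
  obtain ⟨q, w', hq, hw'⟩ := ih _ hlt
  exact ⟨q, w + w', hq, by rw [derivative_add]; linear_combination hw'⟩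

theorem leadingCoeff_add_natCast_mul_coeff_ne_zero {k1 k2 : K[X]} (hk1 : k1 ≠ 0)
    (hcase : k2.natDegree ≤ k1.natDegree ∨
      (k1.natDegree + 1 = k2.natDegree ∧
        ∀ n : ℕ, 0 < n → -(k1.leadingCoeff / k2.leadingCoeff) ≠ (n : K)))
    (m : ℕ) : k1.leadingCoeff + m * k2.coeff (k1.natDegree + 1) ≠ 0 := by
  rcases hcase with h | ⟨h, hn⟩
  · rw [coeff_eq_zero_of_natDegree_lt (by omega), mul_zero, add_zero]
    exact leadingCoeff_ne_zero.mpr hk1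
  rcases m.eq_zero_or_pos with rfl | hm
  · simpa using hk1
  have hk2 : k2.leadingCoeff ≠ 0 := leadingCoeff_ne_zero.mpr (by rintro rfl; simp at h)
  rw [h, ← leadingCoeff]
  intro h0
  apply hn m hm
  field_simp
  linear_combination -h0

end Field

end Polynomial

theorem stmt_5_general {E : Type*} [Field E] (k1 k2 : E[X]) (hk1 : k1 ≠ 0)
    (hcase : k2.natDegree ≤ k1.natDegree ∨
      (k1.natDegree + 1 = k2.natDegree ∧
        ∀ n : ℕ, 0 < n → -(k1.leadingCoeff / k2.leadingCoeff) ≠ (n : E)))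
    (p : E[X]) :
    ∃ q w : E[X], q.degree < (k1.natDegree : WithBot ℕ) ∧
      p - q = k2 * derivative w + k1 * w := by
  have hdeg : k2.natDegree ≤ k1.natDegree + 1 := by rcases hcase with h | ⟨h, -⟩ <;> omega
  exact exists_degree_lt_sub_eq_mul_derivative_add_mul hdeg
    (leadingCoeff_add_natCast_mul_coeff_ne_zero hk1 hcase) p

theorem stmt_5 {E : Type*} [Field E] [CharZero E] (k1 k2 : E[X]) (hk1 : k1 ≠ 0)
    (hk2 : k2 ≠ 0) (hcop : IsCoprime k1 k2) (hdr : DiffReduced k1 k2)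
    (hcase : k2.natDegree ≤ k1.natDegree ∨
      (k1.natDegree + 1 = k2.natDegree ∧
        ∀ n : ℕ, 0 < n → -(k1.leadingCoeff / k2.leadingCoeff) ≠ (n : E)))
    (p : E[X]) :
    ∃ q w : E[X], q.degree < (k1.natDegree : WithBot ℕ) ∧
      p - q = k2 * derivative w + k1 * w :=
  stmt_5_general k1 k2 hk1 hcase p
end

section
/- Let K = k1/k2 be nonzero differential-reduced with d1 = deg k1 and d2 = deg k2. Then the quotient E-vector space E[y]/M_K, where M_K = { k2·D(w) + k1·w : w ∈ E[y] }, has dimension at most max(d1, d2 − 1). -/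
open Polynomial

/-!
The operator `L w = k2·w' + k1·w` raises degrees by at most `N = max(d1, d2 - 1)`, and the
coefficient of `X^(m+N)` in `L(X^m)` is `m·β + α`, where `α = [X^N]k1` and `β = [X^(N+1)]k2`
are not both zero. In characteristic zero this vanishes for at most one `m`, so beyond some
degree `m₀ + N` every leading term is reached by the range of `L`, and
`E[X] = range L + E[X]_(m₀+N+1)`.
Differential-reducedness makes `L` injective, so `L` embeds `E[X]_(m₀+1)` into
`range L ∩ E[X]_(m₀+N+1)`, and the quotient has dimension at most `(m₀+N+1) - (m₀+1) = N`.
-/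

open Module

theorem rank_quotient_range_le_finrank_sub {K P Q : Type*} [Field K] [AddCommGroup P] [Module K P]
    [AddCommGroup Q] [Module K Q] (f : P →ₗ[K] Q) (U : Submodule K P) (V : Submodule K Q)
    [FiniteDimensional K V] (hf : Set.InjOn f U) (hUV : U.map f ≤ V)
    (hspan : LinearMap.range f ⊔ V = ⊤) :
    Module.rank K (Q ⧸ LinearMap.range f) ≤ (finrank K V - finrank K U : ℕ) := by
  set π := (LinearMap.range f).mkQ ∘ₗ V.subtype
  have hπ : Function.Surjective π := by
    rintro ⟨x⟩
    obtain ⟨_, ⟨w, rfl⟩, z, hz, rfl⟩ :=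
      Submodule.mem_sup.mp (hspan ▸ Submodule.mem_top : x ∈ _)
    exact ⟨⟨z, hz⟩, (Submodule.Quotient.eq _).mpr ⟨-w, by simp⟩⟩
  have : FiniteDimensional K (Q ⧸ LinearMap.range f) := Module.Finite.of_surjective π hπ
  let g : U →ₗ[K] LinearMap.ker π :=
    LinearMap.codRestrict _
      (LinearMap.codRestrict V (f ∘ₗ U.subtype) fun u => hUV ⟨u, u.2, rfl⟩)
      fun u => by simp [π]
  have hg : Function.Injective g := fun u v huv =>
    Subtype.ext (hf u.2 v.2 (congrArg (fun x : LinearMap.ker π => ((x : V) : Q)) huv))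
  have hrank := LinearMap.finrank_range_add_finrank_ker π
  rw [LinearMap.range_eq_top.mpr hπ, finrank_top] at hrank
  have := LinearMap.finrank_le_finrank_of_injective hg
  rw [← finrank_eq_rank]
  exact_mod_cast (by omega)

theorem exists_forall_natCast_mul_add_ne_zero {K : Type*} [CommRing K] [NoZeroDivisors K]
    [CharZero K] {α β : K} (h : α ≠ 0 ∨ β ≠ 0) :
    ∃ m₀ : ℕ, ∀ m > m₀, (m : K) * β + α ≠ 0 := by
  have hsub : {m : ℕ | (m : K) * β + α = 0}.Subsingleton := by
    intro m (hm : (m : K) * β + α = 0) n (hn : (n : K) * β + α = 0)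
    rcases mul_eq_zero.mp (by linear_combination hm - hn : ((m : K) - n) * β = 0) with hmn | hβ
    · exact_mod_cast sub_eq_zero.mp hmn
    · rw [hβ, mul_zero, zero_add] at hm
      exact absurd h (by simp [hm, hβ])
  obtain ⟨m₀, hm₀⟩ := hsub.finite.bddAbove
  exact ⟨m₀, fun m hm hzero => (hm₀ hzero).not_gt hm⟩

namespace Polynomial

theorem finrank_degreeLT {R : Type*} [Semiring R] [StrongRankCondition R] (n : ℕ) :
    finrank R (degreeLT R n) = n := by
  rw [finrank_eq_card_basis (degreeLT.basis R n), Fintype.card_fin]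

theorem sup_degreeLT_eq_top {R : Type*} [Field R] (G : Submodule R R[X]) (n₀ : ℕ)
    (h : ∀ n ≥ n₀, ∃ e ∈ G, e.degree = n) : G ⊔ degreeLT R n₀ = ⊤ := by
  rw [Submodule.eq_top_iff']
  intro p
  induction hd : p.natDegree using Nat.strong_induction_on generalizing p with
  | _ d ih =>
  by_cases hp : p.degree < n₀
  · exact Submodule.mem_sup_right (mem_degreeLT.mpr hp)
  have hp0 : p ≠ 0 := by rintro rfl; simp at hp
  rw [degree_eq_natDegree hp0, hd, not_lt, Nat.cast_le] at hp
  obtain ⟨e, heG, he⟩ := h d hp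
  have he0 : e ≠ 0 := by rintro rfl; simp at he
  set q := C (p.leadingCoeff / e.leadingCoeff) * e
  have hqG : q ∈ G := by
    simpa only [q, smul_eq_C_mul] using G.smul_mem (p.leadingCoeff / e.leadingCoeff) heG
  have hlc : p.leadingCoeff = q.leadingCoeff := by
    rw [leadingCoeff_mul, leadingCoeff_C, div_mul_cancel₀ _ (leadingCoeff_ne_zero.mpr he0)]
  have hdeg : p.degree = q.degree := by
    rw [degree_C_mul (div_ne_zero (leadingCoeff_ne_zero.mpr hp0) (leadingCoeff_ne_zero.mpr he0)),
      he, degree_eq_natDegree hp0, hd]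
  have hsub : p - q ∈ G ⊔ degreeLT R n₀ := by
    by_cases hpq : p - q = 0
    · rw [hpq]; exact Submodule.zero_mem _
    refine ih _ ?_ _ rfl
    rw [← hd]
    exact natDegree_lt_natDegree hpq (degree_sub_lt_left hdeg hp0 hlc)
  simpa using Submodule.add_mem _ hsub (Submodule.mem_sup_left hqG)

section CommSemiring

variable {R : Type*} [CommSemiring R]

noncomputable def diffOp (k1 k2 : R[X]) : R[X] →ₗ[R] R[X] :=
  LinearMap.mulLeft R k2 ∘ₗ (derivative : R[X] →ₗ[R] R[X]) + LinearMap.mulLeft R k1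

@[simp]
theorem diffOp_apply (k1 k2 w : R[X]) : diffOp k1 k2 w = k2 * derivative w + k1 * w :=
  rfl

variable {k1 k2 w : R[X]} {m N : ℕ}

theorem natDegree_diffOp_le (h1 : k1.natDegree ≤ N) (h2 : k2.natDegree ≤ N + 1)
    (hw : w.natDegree ≤ m) : (diffOp k1 k2 w).natDegree ≤ m + N := by
  have hk1w : (k1 * w).natDegree ≤ m + N :=
    natDegree_mul_le_of_le h1 hw |>.trans_eq (add_comm _ _)
  rcases m with _ | m
  · obtain ⟨c, rfl⟩ : ∃ c, w = C c := ⟨_, eq_C_of_natDegree_le_zero hw⟩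
    rwa [diffOp_apply, derivative_C, mul_zero, zero_add]
  · have hw' : (derivative w).natDegree ≤ m := (natDegree_derivative_le w).trans (by omega)
    refine natDegree_add_le_of_degree_le ?_ hk1w
    exact natDegree_mul_le_of_le h2 hw' |>.trans_eq (by ring)

theorem coeff_diffOp_add (h1 : k1.natDegree ≤ N) (h2 : k2.natDegree ≤ N + 1)
    (hw : w.natDegree ≤ m) :
    (diffOp k1 k2 w).coeff (m + N) = (m * k2.coeff (N + 1) + k1.coeff N) * w.coeff m := by
  rw [diffOp_apply, coeff_add, add_comm m N, coeff_mul_add_eq_of_natDegree_le h1 hw, add_mul,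
    mul_comm (k1.coeff N)]
  rcases m with _ | m
  · obtain ⟨c, rfl⟩ : ∃ c, w = C c := ⟨_, eq_C_of_natDegree_le_zero hw⟩
    simp
  · have hw' : (derivative w).natDegree ≤ m := (natDegree_derivative_le w).trans (by omega)
    rw [show N + (m + 1) = (N + 1) + m by ring, coeff_mul_add_eq_of_natDegree_le h2 hw',
      coeff_derivative]
    push_cast
    ring

theorem degree_diffOp_X_pow (h1 : k1.natDegree ≤ N) (h2 : k2.natDegree ≤ N + 1)
    (hc : (m : R) * k2.coeff (N + 1) + k1.coeff N ≠ 0) :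
    (diffOp k1 k2 (X ^ m)).degree = ↑(m + N) := by
  refine degree_eq_of_le_of_coeff_ne_zero
    (degree_le_of_natDegree_le (natDegree_diffOp_le h1 h2 (natDegree_X_pow_le m))) ?_
  rwa [coeff_diffOp_add h1 h2 (natDegree_X_pow_le m), coeff_X_pow_self, mul_one]

theorem map_diffOp_degreeLT_le (h1 : k1.natDegree ≤ N) (h2 : k2.natDegree ≤ N + 1) (m : ℕ) :
    (degreeLT R (m + 1)).map (diffOp k1 k2) ≤ degreeLT R (m + N + 1) := by
  intro _ h
  obtain ⟨w, hw, rfl⟩ := Submodule.mem_map.mp h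
  rw [degreeLT_succ_eq_degreeLE, mem_degreeLE, ← natDegree_le_iff_degree_le] at hw ⊢
  exact natDegree_diffOp_le h1 h2 hw

theorem diffOp_pow_mul (k1 p u v : R[X]) (a : ℕ) :
    diffOp k1 (p * u) (p ^ a * v) =
      p ^ a * ((a * u * derivative p + k1) * v + p * (u * derivative v)) := by
  rcases a with _ | a
  · simp only [pow_zero, one_mul, diffOp_apply, Nat.cast_zero, zero_mul, zero_add]
    ring
  · simp only [diffOp_apply, derivative_mul, derivative_pow_succ, C_add, C_1, C_eq_natCast]
    push_cast
    ring

end CommSemiring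

section Field

variable {E : Type*} [Field E] {k1 k2 w : E[X]}

theorem diffOp_ne_zero_of_isUnit (hk1 : k1 ≠ 0) (hk2 : IsUnit k2) (hw : w ≠ 0) :
    diffOp k1 k2 w ≠ 0 := by
  have hlt : (k2 * derivative w).degree < (k1 * w).degree := by
    rw [degree_mul, degree_mul, degree_eq_zero_of_isUnit hk2, zero_add]
    calc (derivative w).degree < w.degree := degree_derivative_lt hw
      _ ≤ k1.degree + w.degree := le_add_of_nonneg_left (zero_le_degree_iff.mpr hk1)
  rw [diffOp_apply, ← degree_ne_bot, degree_add_eq_right_of_degree_lt hlt, degree_ne_bot]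
  exact mul_ne_zero hk1 hw

theorem diffOp_ne_zero_of_prime_dvd (hdr : DiffReduced k1 k2) {p : E[X]} (hp : Prime p)
    (hpk2 : p ∣ k2) (hw : w ≠ 0) : diffOp k1 k2 w ≠ 0 := by
  -- with `k2 = p u` and `w = p^a v`, `p ∤ v`, the equation `L w = 0` forces `p ∣ k1 + a·k2'`
  obtain ⟨u, rfl⟩ := hpk2
  obtain ⟨a, v, hpv, rfl⟩ := WfDvdMonoid.max_power_factor hw hp.irreducible
  intro h
  rw [diffOp_pow_mul] at h
  have h' := (mul_eq_zero.mp h).resolve_left (pow_ne_zero _ hp.ne_zero)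
  have hdvd : p ∣ (a * u * derivative p + k1) * v :=
    ⟨-(u * derivative v), by linear_combination h'⟩
  have hpk1 : p ∣ k1 - ((-a : ℤ) : E[X]) * derivative (p * u) := by
    have : k1 - ((-a : ℤ) : E[X]) * derivative (p * u) =
        (a * u * derivative p + k1) + p * (a * derivative u) := by
      push_cast
      rw [derivative_mul]
      ring
    rw [this]
    exact dvd_add ((hp.dvd_mul.mp hdvd).resolve_right hpv) (dvd_mul_right _ _)
  exact hp.not_isUnit ((hdr (-a)).isUnit_of_dvd' (dvd_mul_right p u) hpk1)

theorem diffOp_injective (hk1 : k1 ≠ 0) (hk2 : k2 ≠ 0) (hdr : DiffReduced k1 k2) :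
    Function.Injective (diffOp k1 k2) := by
  refine (injective_iff_map_eq_zero _).mpr fun w hw => by_contra fun hw0 => ?_
  by_cases hu : IsUnit k2
  · exact diffOp_ne_zero_of_isUnit hk1 hu hw0 hw
  · obtain ⟨p, hp, hpk2⟩ := WfDvdMonoid.exists_irreducible_factor hu hk2
    exact diffOp_ne_zero_of_prime_dvd hdr hp.prime hpk2 hw0 hw

theorem coeff_natDegree_max_ne_zero_or (hk1 : k1 ≠ 0) :
    k1.coeff (max k1.natDegree (k2.natDegree - 1)) ≠ 0 ∨
      k2.coeff (max k1.natDegree (k2.natDegree - 1) + 1) ≠ 0 := by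
  by_cases h : k1.natDegree = max k1.natDegree (k2.natDegree - 1)
  · exact .inl (h ▸ leadingCoeff_ne_zero.mpr hk1)
  · have hk2 : k2.natDegree = max k1.natDegree (k2.natDegree - 1) + 1 := by omega
    have hk20 : k2 ≠ 0 := by rintro rfl; simp at hk2
    exact .inr (hk2 ▸ leadingCoeff_ne_zero.mpr hk20)

end Field

end Polynomial

theorem stmt_6_general {E : Type*} [Field E] [CharZero E] (k1 k2 : E[X]) (hk1 : k1 ≠ 0)
    (hk2 : k2 ≠ 0) (hdr : DiffReduced k1 k2) :
    Module.rank E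
        (E[X] ⧸ LinearMap.range
          (LinearMap.mulLeft E k2 ∘ₗ (derivative : E[X] →ₗ[E] E[X]) +
            LinearMap.mulLeft E k1)) ≤
      ((max k1.natDegree (k2.natDegree - 1) : ℕ) : Cardinal) := by
  set N := max k1.natDegree (k2.natDegree - 1)
  have h1 : k1.natDegree ≤ N := le_max_left _ _
  have h2 : k2.natDegree ≤ N + 1 := by omega
  obtain ⟨m₀, hm₀⟩ :=
    exists_forall_natCast_mul_add_ne_zero (coeff_natDegree_max_ne_zero_or (k2 := k2) hk1)
  have hspan : LinearMap.range (diffOp k1 k2) ⊔ degreeLT E (m₀ + N + 1) = ⊤ := by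
    refine sup_degreeLT_eq_top _ _ fun n hn => ⟨_, ⟨X ^ (n - N), rfl⟩, ?_⟩
    rw [degree_diffOp_X_pow h1 h2 (hm₀ _ (by omega)), Nat.sub_add_cancel (by omega)]
  have hrank := rank_quotient_range_le_finrank_sub (diffOp k1 k2) _ _
    (diffOp_injective hk1 hk2 hdr).injOn (map_diffOp_degreeLT_le h1 h2 m₀) hspan
  rwa [finrank_degreeLT, finrank_degreeLT, show m₀ + N + 1 - (m₀ + 1) = N by omega] at hrank

theorem stmt_6 {E : Type*} [Field E] [CharZero E] (k1 k2 : E[X]) (hk1 : k1 ≠ 0)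
    (hk2 : k2 ≠ 0) (hcop : IsCoprime k1 k2) (hdr : DiffReduced k1 k2) :
    Module.rank E
        (E[X] ⧸ LinearMap.range
          (LinearMap.mulLeft E k2 ∘ₗ (derivative : E[X] →ₗ[E] E[X]) +
            LinearMap.mulLeft E k1)) ≤
      ((max k1.natDegree (k2.natDegree - 1) : ℕ) : Cardinal) :=
  stmt_6_general k1 k2 hk1 hk2 hdr
end

section
/- Let K = k1/k2 ∈ E(y) be nonzero differential-reduced with gcd(k1,k2)=1, let p ∈ E[y] and m ≥ 1. Then there exist polynomials p1, p2 ∈ E[y] such that p/k2^m = D(p1/k2^{m−1}) + (p1/k2^{m−1})·K + p2/k2 in E(y). -/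
open Polynomial

/-!
Clearing the denominator `k2 ^ (n + 1)` turns the claim into the polynomial identity
`p = D p1 · k2 + p1 · (k1 - n · D k2) + p2 · k2 ^ n`, solved by induction on `n`: differential
reducedness gives a Bézout relation `u · k2 + v · (k1 - (n + 1) · D k2) = 1`, and then
`p1 := p v + q1 · k2` works once `q1` solves the identity for `p u - D (p v)` at level `n`.
-/

lemma derivative_mul_sub_mul_eq_of_mul_eq {R : Type*} [CommRing R] {a b c d : R[X]}
    (h : a * d = c * b) :
    (derivative a * b - a * derivative b) * d ^ 2 =
      (derivative c * d - c * derivative d) * b ^ 2 := by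
  have h' := congrArg derivative h
  simp only [derivative_mul] at h'
  linear_combination b * d * h' - (derivative b * d + b * derivative d) * h

lemma mul_derivative_pow {R : Type*} [CommSemiring R] (q : R[X]) (n : ℕ) :
    q * derivative (q ^ n) = n * q ^ n * derivative q := by
  cases n with
  | zero => simp
  | succ n =>
    rw [derivative_pow, Nat.add_sub_cancel, C_eq_natCast]
    push_cast
    ring

section

variable {E : Type*} [Field E]

lemma Dr_div (a b : E[X]) (hb : b ≠ 0) :
    Dr (algebraMap E[X] (RatFunc E) a / algebraMap E[X] (RatFunc E) b) =
      (algebraMap E[X] (RatFunc E) (derivative a) * algebraMap E[X] (RatFunc E) b -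
        algebraMap E[X] (RatFunc E) a * algebraMap E[X] (RatFunc E) (derivative b)) /
        (algebraMap E[X] (RatFunc E) b) ^ 2 := by
  set f := algebraMap E[X] (RatFunc E) a / algebraMap E[X] (RatFunc E) b
  have hb' := RatFunc.algebraMap_ne_zero hb
  have hden := RatFunc.algebraMap_ne_zero f.denom_ne_zero
  have hcross : a * f.denom = f.num * b := by
    have hf : f = algebraMap E[X] (RatFunc E) f.num / algebraMap E[X] (RatFunc E) f.denom :=
      (RatFunc.num_div_denom f).symm
    rw [div_eq_div_iff hb' hden] at hf
    exact RatFunc.algebraMap_injective E (by simpa only [map_mul] using hf)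
  rw [Dr, div_eq_div_iff (pow_ne_zero 2 hden) (pow_ne_zero 2 hb')]
  simpa only [map_mul, map_sub, map_pow] using
    (congrArg (algebraMap E[X] (RatFunc E)) (derivative_mul_sub_mul_eq_of_mul_eq hcross)).symm

lemma DiffReduced.exists_hermite_reduction {k1 k2 : E[X]} (hdr : DiffReduced k1 k2) (n : ℕ)
    (p : E[X]) : ∃ p1 p2 : E[X],
      p = derivative p1 * k2 + p1 * (k1 - n * derivative k2) + p2 * k2 ^ n := by
  induction n generalizing p with
  | zero => exact ⟨0, p, by simp⟩
  | succ n ih =>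
    obtain ⟨u, v, huv⟩ := hdr (n + 1)
    obtain ⟨q1, q2, hq⟩ := ih (p * u - derivative (p * v))
    refine ⟨p * v + q1 * k2, q2, ?_⟩
    simp only [derivative_add, derivative_mul] at hq ⊢
    push_cast at huv ⊢
    linear_combination -p * huv + k2 * hq

end

theorem stmt_8_general {E : Type*} [Field E] (k1 k2 : E[X])
    (hk2 : k2 ≠ 0) (hdr : DiffReduced k1 k2)
    (p : E[X]) (m : ℕ) (hm : 1 ≤ m) :
    ∃ p1 p2 : E[X],
      algebraMap E[X] (RatFunc E) p / (algebraMap E[X] (RatFunc E) k2) ^ m =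
        Dr (algebraMap E[X] (RatFunc E) p1 / (algebraMap E[X] (RatFunc E) k2) ^ (m - 1)) +
          (algebraMap E[X] (RatFunc E) p1 / (algebraMap E[X] (RatFunc E) k2) ^ (m - 1)) *
            (algebraMap E[X] (RatFunc E) k1 / algebraMap E[X] (RatFunc E) k2) +
          algebraMap E[X] (RatFunc E) p2 / algebraMap E[X] (RatFunc E) k2 := by
  obtain ⟨n, rfl⟩ := Nat.exists_eq_add_of_le' hm
  obtain ⟨p1, p2, rfl⟩ := hdr.exists_hermite_reduction n p
  refine ⟨p1, p2, ?_⟩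
  have hpow := congrArg (algebraMap E[X] (RatFunc E)) (mul_derivative_pow k2 n)
  rw [Nat.add_sub_cancel, ← map_pow (algebraMap E[X] (RatFunc E)) k2 n,
    Dr_div p1 _ (pow_ne_zero n hk2)]
  simp only [map_add, map_sub, map_mul, map_pow, map_natCast] at hpow ⊢
  have hk2' := RatFunc.algebraMap_ne_zero hk2
  field_simp
  linear_combination
    (algebraMap E[X] (RatFunc E) k2 ^ (n + 1) * algebraMap E[X] (RatFunc E) p1) * hpow

theorem stmt_8 {E : Type*} [Field E] [CharZero E] (k1 k2 : E[X]) (hk1 : k1 ≠ 0)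
    (hk2 : k2 ≠ 0) (hcop : IsCoprime k1 k2) (hdr : DiffReduced k1 k2)
    (p : E[X]) (m : ℕ) (hm : 1 ≤ m) :
    ∃ p1 p2 : E[X],
      algebraMap E[X] (RatFunc E) p / (algebraMap E[X] (RatFunc E) k2) ^ m =
        Dr (algebraMap E[X] (RatFunc E) p1 / (algebraMap E[X] (RatFunc E) k2) ^ (m - 1)) +
          (algebraMap E[X] (RatFunc E) p1 / (algebraMap E[X] (RatFunc E) k2) ^ (m - 1)) *
            (algebraMap E[X] (RatFunc E) k1 / algebraMap E[X] (RatFunc E) k2) +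
          algebraMap E[X] (RatFunc E) p2 / algebraMap E[X] (RatFunc E) k2 :=
  stmt_8_general k1 k2 hk2 hdr p m hm
end

section
/- Let K = k1/k2 ∈ E(y) be nonzero differential-reduced with gcd(k1,k2)=1, and let r = q/b + v/k2 where b ∈ E[y] is squarefree, gcd(b, k2) = 1, deg q < deg b, and v ∈ N_K, a fixed E-linear complement of M_K = { k2·D(w) + k1·w : w ∈ E[y] } in E[y] spanned by monomials. If there exists s ∈ E(y) with r = D(s) + K·s, then r = 0. -/
/-! Write `s = a/d` in lowest terms. Clearing denominators in `r = D(s) + K·s` gives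
`b · (k2 (a'd - ad') + k1 a d) = (q k2 + v b) · d²`. Suppose a prime `t` divides `d`, say
`d = t^(m+1) w` with `t ∤ w`; then `t^(2m+2)` divides the right-hand side. On the left, if `t ∤ k2`,
the term `k2 a d'` has `t`-multiplicity exactly `m` (as `t ∤ t'` in characteristic zero) and `b` is
squarefree, which is too little. If `t ∣ k2`, then `t ∤ b` and the left side is `t^(m+1)` times a
polynomial congruent to `a w (k1 - (m+1) k2')` modulo `t`, which is prime to `t` because `K` is
differential-reduced. Hence `d = 1`, so `q k2 + v b = b (k2 a' + k1 a)`; thus `b ∣ q`, forcing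
`q = 0`, and then `v ∈ M_K ∩ N_K = 0`. -/

open Polynomial

/-- The subspace `M_K = { k2·D(w) + k1·w : w ∈ E[y] }` for polynomial reduction. -/
noncomputable def MK {E : Type*} [Field E] (k1 k2 : E[X]) : Submodule E E[X] :=
  LinearMap.range
    (LinearMap.mulLeft E k2 ∘ₗ (derivative : E[X] →ₗ[E] E[X]) + LinearMap.mulLeft E k1)

section

variable {E : Type*} [Field E]

noncomputable def twistedDerivNum (k1 k2 a d : E[X]) : E[X] :=
  k2 * (derivative a * d - a * derivative d) + k1 * a * d

theorem Dr_add_mul_eq_div (k1 : E[X]) {k2 : E[X]} (hk2 : k2 ≠ 0) (s : RatFunc E) :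
    Dr s + (algebraMap E[X] (RatFunc E) k1 / algebraMap E[X] (RatFunc E) k2) * s =
      algebraMap E[X] (RatFunc E) (twistedDerivNum k1 k2 s.num s.denom) /
        algebraMap E[X] (RatFunc E) (k2 * s.denom ^ 2) := by
  have hk : algebraMap E[X] (RatFunc E) k2 ≠ 0 := RatFunc.algebraMap_ne_zero hk2
  have hd : algebraMap E[X] (RatFunc E) s.denom ≠ 0 :=
    RatFunc.algebraMap_ne_zero s.denom_ne_zero
  have hs : Dr s + (algebraMap E[X] (RatFunc E) k1 / algebraMap E[X] (RatFunc E) k2) * s =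
      Dr s + (algebraMap E[X] (RatFunc E) k1 / algebraMap E[X] (RatFunc E) k2) *
        (algebraMap E[X] (RatFunc E) s.num / algebraMap E[X] (RatFunc E) s.denom) := by
    rw [RatFunc.num_div_denom]
  rw [hs, Dr]
  simp only [twistedDerivNum, map_add, map_sub, map_mul, map_pow]
  field_simp

theorem twistedDerivNum_one_mem_MK (k1 k2 a : E[X]) : twistedDerivNum k1 k2 a 1 ∈ MK k1 k2 :=
  ⟨a, by simp [twistedDerivNum]⟩

theorem derivative_pow_succ_mul_s11 (t w : E[X]) (m : ℕ) :
    derivative (t ^ (m + 1) * w) =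
      t ^ m * (((m : E[X]) + 1) * derivative t * w + t * derivative w) := by
  rw [derivative_mul, derivative_pow_succ]
  simp only [map_add, map_natCast, map_one]
  ring

variable {k1 k2 a b d q v t w : E[X]} {m : ℕ}

theorem mul_twistedDerivNum_eq_of_div_add_div_eq (hb : b ≠ 0) (hk2 : k2 ≠ 0) {s : RatFunc E}
    (h : algebraMap E[X] (RatFunc E) q / algebraMap E[X] (RatFunc E) b +
        algebraMap E[X] (RatFunc E) v / algebraMap E[X] (RatFunc E) k2 =
      Dr s + (algebraMap E[X] (RatFunc E) k1 / algebraMap E[X] (RatFunc E) k2) * s) :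
    b * twistedDerivNum k1 k2 s.num s.denom = (q * k2 + v * b) * s.denom ^ 2 := by
  have hb' := RatFunc.algebraMap_ne_zero hb
  have hk2' := RatFunc.algebraMap_ne_zero hk2
  rw [Dr_add_mul_eq_div k1 hk2, div_add_div _ _ hb' hk2', div_eq_div_iff (mul_ne_zero hb' hk2')
    (RatFunc.algebraMap_ne_zero (mul_ne_zero hk2 (pow_ne_zero 2 s.denom_ne_zero)))] at h
  refine mul_right_cancel₀ hk2 (RatFunc.algebraMap_injective E ?_)
  simp only [map_mul, map_add, map_pow] at h ⊢
  linear_combination -h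

theorem not_pow_dvd_twistedDerivNum_of_dvd (hdr : DiffReduced k1 k2) (ht : Irreducible t)
    (htk2 : t ∣ k2) (hta : ¬ t ∣ a) (htw : ¬ t ∣ w) :
    ¬ t ^ (m + 2) ∣ twistedDerivNum k1 k2 a (t ^ (m + 1) * w) := by
  have htp := ht.prime
  obtain ⟨u, rfl⟩ := htk2
  have hres : ¬ t ∣ k1 - ((m : E[X]) + 1) * derivative (t * u) := fun h =>
    ht.not_isUnit ((hdr (m + 1)).isUnit_of_dvd' (dvd_mul_right t u) (by simpa using h))
  have htY : ¬ t ∣ a * w * (k1 - ((m : E[X]) + 1) * derivative (t * u)) + t *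
      (u * derivative a * w - u * a * derivative w + ((m : E[X]) + 1) * a * w * derivative u) := by
    rw [dvd_add_left (dvd_mul_right _ _)]
    exact htp.not_dvd_mul (htp.not_dvd_mul hta htw) hres
  have hL : twistedDerivNum k1 (t * u) a (t ^ (m + 1) * w) = t ^ (m + 1) *
      (a * w * (k1 - ((m : E[X]) + 1) * derivative (t * u)) + t * (u * derivative a * w -
        u * a * derivative w + ((m : E[X]) + 1) * a * w * derivative u)) := by
    rw [twistedDerivNum, derivative_pow_succ_mul_s11, derivative_mul]
    ring
  rwa [hL, pow_succ _ (m + 1), mul_dvd_mul_iff_left (pow_ne_zero _ htp.ne_zero)]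

variable [CharZero E]

theorem not_pow_dvd_mul_twistedDerivNum_of_not_dvd (ht : Irreducible t) (htk2 : ¬ t ∣ k2)
    (hta : ¬ t ∣ a) (htw : ¬ t ∣ w) (hb : Squarefree b) :
    ¬ t ^ (m + 2) ∣ b * twistedDerivNum k1 k2 a (t ^ (m + 1) * w) := by
  have htp := ht.prime
  have hsucc : IsUnit ((m : E[X]) + 1) := by
    rw [← map_natCast C, ← C_1, ← C_add]
    exact isUnit_C.mpr (Nat.cast_add_one_ne_zero m).isUnit
  have htt' : ¬ t ∣ derivative t := fun h => ht.not_isUnit (ht.separable.isUnit_of_dvd' dvd_rfl h)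
  have htG : ¬ t ∣ ((m : E[X]) + 1) * derivative t * w + t * derivative w := by
    rw [dvd_add_left (dvd_mul_right _ _)]
    exact htp.not_dvd_mul (htp.not_dvd_mul (fun h => ht.not_isUnit (isUnit_of_dvd_unit h hsucc))
      htt') htw
  have htZ : ¬ t ∣ t * ((k2 * derivative a + k1 * a) * w) -
      k2 * a * (((m : E[X]) + 1) * derivative t * w + t * derivative w) := by
    rw [dvd_sub_right (dvd_mul_right _ _)]
    exact htp.not_dvd_mul (htp.not_dvd_mul htk2 hta) htG
  have hL : b * twistedDerivNum k1 k2 a (t ^ (m + 1) * w) = t ^ m * (b *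
      (t * ((k2 * derivative a + k1 * a) * w) -
        k2 * a * (((m : E[X]) + 1) * derivative t * w + t * derivative w))) := by
    rw [twistedDerivNum, derivative_pow_succ_mul_s11]
    ring
  intro h
  rw [hL, pow_add, mul_dvd_mul_iff_left (pow_ne_zero m htp.ne_zero)] at h
  exact ht.not_isUnit (hb t (by simpa [sq] using htp.pow_dvd_of_dvd_mul_right 2 htZ h))

theorem isUnit_of_mul_twistedDerivNum_eq {P : E[X]} (hdr : DiffReduced k1 k2) (hb : Squarefree b)
    (hbk : IsCoprime b k2) (had : IsCoprime a d) (hd : d ≠ 0)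
    (h : b * twistedDerivNum k1 k2 a d = P * d ^ 2) : IsUnit d := by
  by_contra hdu
  obtain ⟨t, ht, htd⟩ := WfDvdMonoid.exists_irreducible_factor hdu hd
  obtain ⟨n, w, htw, rfl⟩ := WfDvdMonoid.max_power_factor hd ht
  obtain ⟨m, rfl⟩ : ∃ m, n = m + 1 :=
    Nat.exists_eq_succ_of_ne_zero (by rintro rfl; simp_all)
  have hta : ¬ t ∣ a := fun h => ht.not_isUnit (had.isUnit_of_dvd' h htd)
  have hpow : t ^ (m + 2) ∣ b * twistedDerivNum k1 k2 a (t ^ (m + 1) * w) :=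
    h ▸ Dvd.intro (P * t ^ m * w ^ 2) (by ring)
  by_cases htk2 : t ∣ k2
  · have htb : ¬ t ∣ b := fun htb => ht.not_isUnit (hbk.isUnit_of_dvd' htb htk2)
    exact not_pow_dvd_twistedDerivNum_of_dvd hdr ht htk2 hta htw
      (ht.prime.pow_dvd_of_dvd_mul_left _ htb hpow)
  · exact not_pow_dvd_mul_twistedDerivNum_of_not_dvd ht htk2 hta htw hb hpow

end

theorem stmt_11_general {E : Type*} [Field E] [CharZero E] (k1 k2 : E[X])
    (hk2 : k2 ≠ 0) (hdr : DiffReduced k1 k2)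
    (N : Submodule E E[X])
    (hcompl : IsCompl (MK k1 k2) N)
    (q b v : E[X]) (hb : Squarefree b) (hbk : IsCoprime b k2)
    (hdeg : q.degree < b.degree) (hv : v ∈ N) (r : RatFunc E)
    (hr : r = algebraMap E[X] (RatFunc E) q / algebraMap E[X] (RatFunc E) b +
      algebraMap E[X] (RatFunc E) v / algebraMap E[X] (RatFunc E) k2)
    (hint : ∃ s : RatFunc E,
      r = Dr s + (algebraMap E[X] (RatFunc E) k1 / algebraMap E[X] (RatFunc E) k2) * s) :
    r = 0 := by
  obtain ⟨s, hs⟩ := hint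
  have hb0 : b ≠ 0 := hb.ne_zero
  have key := mul_twistedDerivNum_eq_of_div_add_div_eq hb0 hk2 (hr.symm.trans hs)
  have hd : s.denom = 1 := s.monic_denom.eq_one_of_isUnit
    (isUnit_of_mul_twistedDerivNum_eq hdr hb hbk s.isCoprime_num_denom s.denom_ne_zero key)
  rw [hd, one_pow, mul_one] at key
  have hq : q = 0 := eq_zero_of_dvd_of_degree_lt
    (hbk.dvd_of_dvd_mul_right ⟨twistedDerivNum k1 k2 s.num 1 - v, by linear_combination -key⟩)
    hdeg
  have hvL : v = twistedDerivNum k1 k2 s.num 1 := mul_left_cancel₀ hb0 (by rw [key, hq]; ring)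
  have hv0 : v = 0 :=
    Submodule.disjoint_def.mp hcompl.disjoint v (hvL ▸ twistedDerivNum_one_mem_MK ..) hv
  rw [hr, hq, hv0]
  simp

theorem stmt_11 {E : Type*} [Field E] [CharZero E] (k1 k2 : E[X]) (hk1 : k1 ≠ 0)
    (hk2 : k2 ≠ 0) (hcop : IsCoprime k1 k2) (hdr : DiffReduced k1 k2)
    (N : Submodule E E[X])
    (hNmono : ∃ S : Set ℕ, N = Submodule.span E ((fun n => (X : E[X]) ^ n) '' S))
    (hcompl : IsCompl (MK k1 k2) N)
    (q b v : E[X]) (hb : Squarefree b) (hbk : IsCoprime b k2)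
    (hdeg : q.degree < b.degree) (hv : v ∈ N) (r : RatFunc E)
    (hr : r = algebraMap E[X] (RatFunc E) q / algebraMap E[X] (RatFunc E) b +
      algebraMap E[X] (RatFunc E) v / algebraMap E[X] (RatFunc E) k2)
    (hint : ∃ s : RatFunc E,
      r = Dr s + (algebraMap E[X] (RatFunc E) k1 / algebraMap E[X] (RatFunc E) k2) * s) :
    r = 0 :=
  stmt_11_general k1 k2 hk2 hdr N hcompl q b v hb hbk hdeg hv r hr hint
end

section
/- Let K = k1/k2 ∈ E(y) be nonzero differential-reduced, and let r and r′ both be residual forms (r = q/b + v/k2 and r′ = q′/b′ + v′/k2 with b, b′ squarefree, coprime to k2, deg q < deg b, deg q′ < deg b′, v, v′ ∈ N_K) of the same rational function f w.r.t. K, meaning f = D(g) + K·g + r = D(g′) + K·g′ + r′ for some g, g′ ∈ E(y). Then r = r′. -/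
open Polynomial

/-!
Put `h = g' - g`. Then `k2·D(h) + k1·h = k2·(r - r')`, and since `b`, `b'` are squarefree and
prime to `k2`, the right-hand side has at most simple poles, and none at the prime factors of
`k2`. If `h` had a pole of order `e + 1` at a prime `π`, then `k2·D(h) + k1·h` would have a pole
of order exactly `e + 2` at `π` when `π ∤ k2` (characteristic zero), and of order `e + 1` when
`π ∣ k2`: there its leading part is that of `(k1 - (e + 1)·D(k2))·h`, and `π ∤ k1 - (e + 1)·D(k2)`
because `K` is differential-reduced. So `h` is a polynomial, hence `k2·(q/b - q'/b')` is a
polynomial; as `b b'` is prime to `k2` and `q/b - q'/b'` is proper, it vanishes. Finally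
`v - v' = k2·D(h) + k1·h` lies in `M_K ∩ N = 0`.
-/

theorem exists_eq_pow_succ_mul_of_dvd {α : Type*} [CommMonoidWithZero α] [WfDvdMonoid α]
    {π d : α} (hπ : ¬IsUnit π) (hd : d ≠ 0) (hπd : π ∣ d) :
    ∃ (e : ℕ) (u : α), ¬π ∣ u ∧ d = π ^ (e + 1) * u := by
  obtain ⟨_ | e, u, hu, rfl⟩ := WfDvdMonoid.max_power_factor' hd hπ
  · rw [pow_zero, one_mul] at hπd
    exact absurd hπd hu
  · exact ⟨e, u, hu, rfl⟩

namespace Polynomial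

variable {R : Type*} [CommRing R]

theorem pow_add_two_dvd_mul_derivative_sub {π k : R[X]} (hk : π ∣ k) (e : ℕ) (u : R[X]) :
    π ^ (e + 2) ∣ k * derivative (π ^ (e + 1) * u) -
      ((e + 1 : ℕ) : R[X]) * derivative k * (π ^ (e + 1) * u) := by
  obtain ⟨w, rfl⟩ := hk
  refine ⟨w * derivative u - ((e + 1 : ℕ) : R[X]) * derivative w * u, ?_⟩
  simp only [derivative_mul, derivative_pow, Nat.add_sub_cancel, C_eq_natCast]
  ring

theorem not_pow_succ_dvd_derivative_pow_succ_mul {E : Type*} [Field E] [CharZero E] {π u : E[X]}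
    (hπ : Prime π) (hu : ¬π ∣ u) (e : ℕ) : ¬π ^ (e + 1) ∣ derivative (π ^ (e + 1) * u) := by
  have hderiv : derivative (π ^ (e + 1) * u) =
      π ^ e * (C ((e + 1 : ℕ) : E) * derivative π * u + π * derivative u) := by
    simp only [derivative_mul, derivative_pow, Nat.add_sub_cancel]
    ring
  rw [hderiv, pow_succ, mul_dvd_mul_iff_left (pow_ne_zero e hπ.ne_zero),
    dvd_add_left (dvd_mul_right π _)]
  have hC : ¬π ∣ C ((e + 1 : ℕ) : E) := fun h =>
    hπ.not_isUnit (isUnit_of_dvd_unit h (isUnit_C.mpr (Nat.cast_ne_zero.mpr e.succ_ne_zero).isUnit))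
  have hπ' : ¬π ∣ derivative π := fun h =>
    hπ.not_isUnit (hπ.irreducible.separable.isUnit_of_dvd' dvd_rfl h)
  simp only [hπ.dvd_mul, hC, hπ', hu, or_self, not_false_eq_true]

end Polynomial

section RatFunc

variable {E : Type*} [Field E]

local notation "ι" => algebraMap E[X] (RatFunc E)

/-- `v_π(R) ≥ -m`, for `π` prime. -/
def PoleOrderLE (π : E[X]) (m : ℕ) (R : RatFunc E) : Prop :=
  ∃ A c : E[X], ¬π ∣ c ∧ R * ι (π ^ m * c) = ι A

namespace PoleOrderLE

variable {π : E[X]} {m : ℕ} {R S : RatFunc E}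

theorem add (hπ : Prime π) (hR : PoleOrderLE π m R) (hS : PoleOrderLE π m S) :
    PoleOrderLE π m (R + S) := by
  obtain ⟨A, c, hc, hA⟩ := hR
  obtain ⟨B, d, hd, hB⟩ := hS
  refine ⟨A * d + B * c, c * d, fun h => (hπ.dvd_or_dvd h).elim hc hd, ?_⟩
  simp only [map_mul, map_add] at hA hB ⊢
  linear_combination ι d * hA + ι c * hB

theorem neg (hR : PoleOrderLE π m R) : PoleOrderLE π m (-R) := by
  obtain ⟨A, c, hc, hA⟩ := hR
  exact ⟨-A, c, hc, by rw [neg_mul, hA, map_neg]⟩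

theorem sub (hπ : Prime π) (hR : PoleOrderLE π m R) (hS : PoleOrderLE π m S) :
    PoleOrderLE π m (R - S) :=
  sub_eq_add_neg R S ▸ hR.add hπ hS.neg

theorem algebraMap_mul (hR : PoleOrderLE π m R) (p : E[X]) : PoleOrderLE π m (ι p * R) := by
  obtain ⟨A, c, hc, hA⟩ := hR
  exact ⟨p * A, c, hc, by rw [mul_assoc, hA, map_mul]⟩

end PoleOrderLE

theorem poleOrderLE_algebraMap {π : E[X]} (hπ : Prime π) (m : ℕ) (p : E[X]) :
    PoleOrderLE π m (ι p) :=
  ⟨p * π ^ m, 1, hπ.not_dvd_one, by rw [mul_one, map_mul]⟩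

theorem poleOrderLE_zero_div {π b : E[X]} (hb : ¬π ∣ b) (q : E[X]) :
    PoleOrderLE π 0 (ι q / ι b) := by
  have hb0 : ι b ≠ 0 := RatFunc.algebraMap_ne_zero (by rintro rfl; exact hb (dvd_zero π))
  exact ⟨q, b, hb, by rw [pow_zero, one_mul, div_mul_cancel₀ _ hb0]⟩

theorem poleOrderLE_one_div {π b : E[X]} (hπ : Prime π) (hb : Squarefree b) (q : E[X]) :
    PoleOrderLE π 1 (ι q / ι b) := by
  have hb0 : ι b ≠ 0 := RatFunc.algebraMap_ne_zero hb.ne_zero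
  by_cases hπb : π ∣ b
  · obtain ⟨c, rfl⟩ := hπb
    have hc : ¬π ∣ c := fun h => hπ.not_isUnit (hb π (mul_dvd_mul_left π h))
    exact ⟨q, c, hc, by rw [pow_one, div_mul_cancel₀ _ hb0]⟩
  · refine ⟨q * π, b, hπb, ?_⟩
    rw [pow_one, map_mul, map_mul, mul_comm (ι π), ← mul_assoc, div_mul_cancel₀ _ hb0]

theorem dr_div (p q : E[X]) (hq : q ≠ 0) :
    Dr (ι p / ι q) = (ι (derivative p) * ι q - ι p * ι (derivative q)) / ι q ^ 2 := by
  set x : RatFunc E := ι p / ι q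
  have hd0 : x.denom ≠ 0 := x.denom_ne_zero
  have hcross : x.num * q = p * x.denom := by
    apply RatFunc.algebraMap_injective E
    rw [map_mul, map_mul, ← div_eq_div_iff (RatFunc.algebraMap_ne_zero hd0)
      (RatFunc.algebraMap_ne_zero hq), x.num_div_denom]
  have hderiv := congrArg derivative hcross
  rw [derivative_mul, derivative_mul] at hderiv
  have hpoly : (derivative x.num * x.denom - x.num * derivative x.denom) * q ^ 2 =
      (derivative p * q - p * derivative q) * x.denom ^ 2 := by
    linear_combination (q * x.denom) * hderiv -
      (derivative x.denom * q + derivative q * x.denom) * hcross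
  rw [Dr, div_eq_div_iff (pow_ne_zero 2 (RatFunc.algebraMap_ne_zero hd0))
    (pow_ne_zero 2 (RatFunc.algebraMap_ne_zero hq))]
  simpa only [map_mul, map_sub, map_pow] using congrArg ι hpoly

theorem dr_add (x y : RatFunc E) : Dr (x + y) = Dr x + Dr y := by
  have hx : ι x.denom ≠ 0 := RatFunc.algebraMap_ne_zero x.denom_ne_zero
  have hy : ι y.denom ≠ 0 := RatFunc.algebraMap_ne_zero y.denom_ne_zero
  have hxy : x + y = ι (x.num * y.denom + y.num * x.denom) / ι (x.denom * y.denom) := by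
    rw [map_mul, eq_div_iff (mul_ne_zero hx hy), map_add, map_mul, map_mul,
      ← div_mul_cancel₀ (ι x.num) hx, ← div_mul_cancel₀ (ι y.num) hy, x.num_div_denom,
      y.num_div_denom]
    ring
  rw [hxy, dr_div _ _ (mul_ne_zero x.denom_ne_zero y.denom_ne_zero), Dr, Dr]
  simp only [derivative_mul, map_add, map_mul]
  field_simp
  ring

theorem dr_sub (x y : RatFunc E) : Dr (x - y) = Dr x - Dr y :=
  eq_sub_of_add_eq (by rw [← dr_add, sub_add_cancel])

theorem dr_algebraMap (p : E[X]) : Dr (ι p) = ι (derivative p) := by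
  simp [Dr, RatFunc.num_algebraMap, RatFunc.denom_algebraMap]

theorem linear_mul_denom_sq (k1 k2 : E[X]) (h : RatFunc E) :
    (ι k2 * Dr h + ι k1 * h) * ι (h.denom ^ 2) =
      ι (k2 * (derivative h.num * h.denom - h.num * derivative h.denom) +
        k1 * h.num * h.denom) := by
  have hd : ι h.denom ≠ 0 := RatFunc.algebraMap_ne_zero h.denom_ne_zero
  have hh : ι h.num = h * ι h.denom := (div_eq_iff hd).mp h.num_div_denom
  rw [Dr]
  simp only [map_add, map_mul, map_sub, map_pow]
  field_simp
  linear_combination (-(ι k1 * ι h.denom)) * hh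

theorem PoleOrderLE.exists_mul_linear_eq {π k1 k2 : E[X]} {m : ℕ} {h : RatFunc E}
    (hF : PoleOrderLE π m (ι k2 * Dr h + ι k1 * h)) :
    ∃ A c : E[X], ¬π ∣ c ∧ π ^ m * c *
      (k2 * (derivative h.num * h.denom - h.num * derivative h.denom) + k1 * h.num * h.denom) =
        A * h.denom ^ 2 := by
  obtain ⟨A, c, hc, hA⟩ := hF
  refine ⟨A, c, hc, RatFunc.algebraMap_injective E ?_⟩
  rw [map_mul, map_mul ι A, ← linear_mul_denom_sq, ← hA]
  ring

theorem not_dvd_denom_of_not_dvd [CharZero E] {π k1 k2 : E[X]} (hπ : Prime π) (hπk2 : ¬π ∣ k2)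
    {h : RatFunc E} (hF : PoleOrderLE π 1 (ι k2 * Dr h + ι k1 * h)) : ¬π ∣ h.denom := by
  intro hπd
  obtain ⟨e, u, hu, hd⟩ := exists_eq_pow_succ_mul_of_dvd hπ.not_isUnit h.denom_ne_zero hπd
  have hn : ¬π ∣ h.num := fun hn => hπ.not_isUnit (h.isCoprime_num_denom.isUnit_of_dvd' hn hπd)
  obtain ⟨A, c, hc, hA⟩ := hF.exists_mul_linear_eq
  rw [hd] at hA
  set d := π ^ (e + 1) * u
  -- the term `π c k2 n d'` has `π`-adic order exactly `e + 1`, all others at least `e + 2`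
  have hdvd : π * π ^ (e + 1) ∣ π * (c * k2 * h.num * derivative d) :=
    ⟨c * (k2 * derivative h.num + k1 * h.num) * u - A * π ^ e * u ^ 2, by
      linear_combination -hA⟩
  have hndvd : ¬π ∣ c * k2 * h.num := by
    simp only [hπ.dvd_mul, hc, hπk2, hn, or_self, not_false_eq_true]
  rw [mul_dvd_mul_iff_left hπ.ne_zero] at hdvd
  exact not_pow_succ_dvd_derivative_pow_succ_mul hπ hu e
    (hπ.pow_dvd_of_dvd_mul_left _ hndvd hdvd)

theorem not_dvd_denom_of_dvd {π k1 k2 : E[X]} (hdr : DiffReduced k1 k2) (hπ : Prime π)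
    (hπk2 : π ∣ k2) {h : RatFunc E} (hF : PoleOrderLE π 0 (ι k2 * Dr h + ι k1 * h)) :
    ¬π ∣ h.denom := by
  intro hπd
  obtain ⟨e, u, hu, hd⟩ := exists_eq_pow_succ_mul_of_dvd hπ.not_isUnit h.denom_ne_zero hπd
  have hn : ¬π ∣ h.num := fun hn => hπ.not_isUnit (h.isCoprime_num_denom.isUnit_of_dvd' hn hπd)
  obtain ⟨A, c, hc, hA⟩ := hF.exists_mul_linear_eq
  rw [hd] at hA
  set d := π ^ (e + 1) * u
  obtain ⟨w, hw⟩ := hπk2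
  have hdvd : π ^ (e + 2) ∣ c * h.num * (k1 * d - k2 * derivative d) :=
    ⟨A * π ^ e * u ^ 2 - c * w * derivative h.num * u, by
      rw [hw] at hA ⊢
      linear_combination hA⟩
  have hndvd : ¬π ∣ c * h.num := by simp only [hπ.dvd_mul, hc, hn, or_self, not_false_eq_true]
  -- modulo `π ^ (e + 2)`, `k1 d - k2 d'` is congruent to `(k1 - (e + 1) k2') d`
  have hshift :
      π ^ (e + 1) * π ∣ π ^ (e + 1) * ((k1 - ((e + 1 : ℕ) : E[X]) * derivative k2) * u) := by
    convert dvd_add (hπ.pow_dvd_of_dvd_mul_left _ hndvd hdvd)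
      (pow_add_two_dvd_mul_derivative_sub ⟨w, hw⟩ e u) using 1 <;> ring
  rw [mul_dvd_mul_iff_left (pow_ne_zero _ hπ.ne_zero)] at hshift
  have hπk1 := (hπ.dvd_or_dvd hshift).resolve_right hu
  exact hπ.not_isUnit ((hdr (e + 1)).isUnit_of_dvd' ⟨w, hw⟩ (by exact_mod_cast hπk1))

theorem exists_eq_algebraMap_of_poleOrderLE [CharZero E] {k1 k2 : E[X]} (hdr : DiffReduced k1 k2)
    {h : RatFunc E}
    (hF₀ : ∀ π, Prime π → π ∣ k2 → PoleOrderLE π 0 (ι k2 * Dr h + ι k1 * h))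
    (hF₁ : ∀ π, Prime π → ¬π ∣ k2 → PoleOrderLE π 1 (ι k2 * Dr h + ι k1 * h)) :
    ∃ p : E[X], h = ι p := by
  suffices hd : IsUnit h.denom by
    refine ⟨h.num, ?_⟩
    conv_lhs => rw [← h.num_div_denom, h.monic_denom.eq_one_of_isUnit hd, map_one, div_one]
  by_contra hd
  obtain ⟨π, hirr, hπd⟩ := WfDvdMonoid.exists_irreducible_factor hd h.denom_ne_zero
  have hπ := hirr.prime
  by_cases hπk2 : π ∣ k2
  · exact not_dvd_denom_of_dvd hdr hπ hπk2 (hF₀ π hπ hπk2) hπd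
  · exact not_dvd_denom_of_not_dvd hπ hπk2 (hF₁ π hπ hπk2) hπd

theorem div_eq_div_of_mul_sub_eq_algebraMap {k q b q' b' P : E[X]} (hdeg : q.degree < b.degree)
    (hdeg' : q'.degree < b'.degree) (hbk : IsCoprime b k) (hbk' : IsCoprime b' k)
    (H : ι k * (ι q / ι b - ι q' / ι b') = ι P) : ι q / ι b = ι q' / ι b' := by
  have hb : b ≠ 0 := ne_zero_of_degree_gt hdeg
  have hb' : b' ≠ 0 := ne_zero_of_degree_gt hdeg'
  have hιb := RatFunc.algebraMap_ne_zero hb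
  have hιb' := RatFunc.algebraMap_ne_zero hb'
  have hpoly : k * (q * b' - q' * b) = P * (b * b') := by
    apply RatFunc.algebraMap_injective E
    simp only [map_mul, map_sub, ← H]
    field_simp
  have hdvd : b * b' ∣ q * b' - q' * b :=
    (hbk.mul_left hbk').dvd_of_dvd_mul_left ⟨P, by rw [hpoly, mul_comm]⟩
  have hlt : (q * b' - q' * b).degree < (b * b').degree := by
    rw [degree_mul]
    refine (degree_sub_le _ _).trans_lt (max_lt ?_ ?_)
    · rw [degree_mul]
      exact WithBot.add_lt_add_right (degree_ne_bot.mpr hb') hdeg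
    · rw [degree_mul, add_comm b.degree]
      exact WithBot.add_lt_add_right (degree_ne_bot.mpr hb) hdeg'
  rw [div_eq_div_iff hιb hιb', ← map_mul, ← map_mul,
    sub_eq_zero.mp (eq_zero_of_dvd_of_degree_lt hdvd hlt)]

theorem linear_sub_eq_mul_sub {k1 k2 : E[X]} (hk2 : k2 ≠ 0) {f g g' r r' : RatFunc E}
    (hg : f = Dr g + (ι k1 / ι k2) * g + r) (hg' : f = Dr g' + (ι k1 / ι k2) * g' + r') :
    ι k2 * Dr (g' - g) + ι k1 * (g' - g) = ι k2 * (r - r') := by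
  have hk2' : ι k2 ≠ 0 := RatFunc.algebraMap_ne_zero hk2
  rw [dr_sub]
  field_simp at hg hg' ⊢
  linear_combination hg - hg'

theorem div_eq_div_and_sub_mem_MK [CharZero E] {k1 k2 q b v q' b' v' : E[X]} (hk2 : k2 ≠ 0)
    (hdr : DiffReduced k1 k2) (hb : Squarefree b) (hbk : IsCoprime b k2)
    (hdeg : q.degree < b.degree) (hb' : Squarefree b') (hbk' : IsCoprime b' k2)
    (hdeg' : q'.degree < b'.degree) {h : RatFunc E}
    (hF : ι k2 * Dr h + ι k1 * h =
      ι k2 * ((ι q / ι b + ι v / ι k2) - (ι q' / ι b' + ι v' / ι k2))) :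
    ι q / ι b = ι q' / ι b' ∧ v - v' ∈ MK k1 k2 := by
  have hk2' : ι k2 ≠ 0 := RatFunc.algebraMap_ne_zero hk2
  rw [show ι k2 * ((ι q / ι b + ι v / ι k2) - (ι q' / ι b' + ι v' / ι k2)) =
      ι k2 * (ι q / ι b) - ι k2 * (ι q' / ι b') + ι (v - v') by
    rw [map_sub]; field_simp; ring] at hF
  have hpole : ∀ π m, Prime π → PoleOrderLE π m (ι q / ι b) → PoleOrderLE π m (ι q' / ι b') →
      PoleOrderLE π m (ι k2 * Dr h + ι k1 * h) := fun π m hπ hq hq' =>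
    hF ▸ ((hq.algebraMap_mul k2).sub hπ (hq'.algebraMap_mul k2)).add hπ
      (poleOrderLE_algebraMap hπ m _)
  obtain ⟨p, rfl⟩ := exists_eq_algebraMap_of_poleOrderLE hdr
    (fun π hπ hπk2 => hpole π 0 hπ
      (poleOrderLE_zero_div (fun h => hπ.not_isUnit (hbk.isUnit_of_dvd' h hπk2)) q)
      (poleOrderLE_zero_div (fun h => hπ.not_isUnit (hbk'.isUnit_of_dvd' h hπk2)) q'))
    (fun π hπ _ => hpole π 1 hπ (poleOrderLE_one_div hπ hb q) (poleOrderLE_one_div hπ hb' q'))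
  rw [dr_algebraMap] at hF
  have hq : ι q / ι b = ι q' / ι b' :=
    div_eq_div_of_mul_sub_eq_algebraMap hdeg hdeg' hbk hbk'
      (P := k2 * derivative p + k1 * p - (v - v'))
      (by simp only [map_sub, map_add, map_mul] at hF ⊢; linear_combination -hF)
  refine ⟨hq, p, RatFunc.algebraMap_injective E ?_⟩
  rw [hq, sub_self, zero_add] at hF
  simpa only [LinearMap.add_apply, LinearMap.comp_apply, LinearMap.mulLeft_apply, map_add,
    map_mul] using hF

end RatFunc

theorem stmt_12_general {E : Type*} [Field E] [CharZero E] (k1 k2 : E[X])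
    (hk2 : k2 ≠ 0) (hdr : DiffReduced k1 k2)
    (N : Submodule E E[X])
    (hcompl : IsCompl (MK k1 k2) N)
    (f r r' : RatFunc E)
    (q b v : E[X]) (hb : Squarefree b) (hbk : IsCoprime b k2)
    (hdeg : q.degree < b.degree) (hv : v ∈ N)
    (hr : r = algebraMap E[X] (RatFunc E) q / algebraMap E[X] (RatFunc E) b +
      algebraMap E[X] (RatFunc E) v / algebraMap E[X] (RatFunc E) k2)
    (q' b' v' : E[X]) (hb' : Squarefree b') (hbk' : IsCoprime b' k2)
    (hdeg' : q'.degree < b'.degree) (hv' : v' ∈ N)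
    (hr' : r' = algebraMap E[X] (RatFunc E) q' / algebraMap E[X] (RatFunc E) b' +
      algebraMap E[X] (RatFunc E) v' / algebraMap E[X] (RatFunc E) k2)
    (hg : ∃ g : RatFunc E,
      f = Dr g + (algebraMap E[X] (RatFunc E) k1 / algebraMap E[X] (RatFunc E) k2) * g + r)
    (hg' : ∃ g' : RatFunc E,
      f = Dr g' + (algebraMap E[X] (RatFunc E) k1 / algebraMap E[X] (RatFunc E) k2) * g' + r') :
    r = r' := by
  obtain ⟨g, hg⟩ := hg
  obtain ⟨g', hg'⟩ := hg'
  have hF := linear_sub_eq_mul_sub hk2 hg hg'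
  rw [hr, hr'] at hF
  obtain ⟨hq, hM⟩ := div_eq_div_and_sub_mem_MK hk2 hdr hb hbk hdeg hb' hbk' hdeg' hF
  have hvv : v - v' = 0 := Submodule.disjoint_def.mp hcompl.disjoint _ hM (N.sub_mem hv hv')
  rw [hr, hr', hq, sub_eq_zero.mp hvv]

theorem stmt_12 {E : Type*} [Field E] [CharZero E] (k1 k2 : E[X]) (hk1 : k1 ≠ 0)
    (hk2 : k2 ≠ 0) (hcop : IsCoprime k1 k2) (hdr : DiffReduced k1 k2)
    (N : Submodule E E[X])
    (hNmono : ∃ S : Set ℕ, N = Submodule.span E ((fun n => (X : E[X]) ^ n) '' S))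
    (hcompl : IsCompl (MK k1 k2) N)
    (f r r' : RatFunc E)
    (q b v : E[X]) (hb : Squarefree b) (hbk : IsCoprime b k2)
    (hdeg : q.degree < b.degree) (hv : v ∈ N)
    (hr : r = algebraMap E[X] (RatFunc E) q / algebraMap E[X] (RatFunc E) b +
      algebraMap E[X] (RatFunc E) v / algebraMap E[X] (RatFunc E) k2)
    (q' b' v' : E[X]) (hb' : Squarefree b') (hbk' : IsCoprime b' k2)
    (hdeg' : q'.degree < b'.degree) (hv' : v' ∈ N)
    (hr' : r' = algebraMap E[X] (RatFunc E) q' / algebraMap E[X] (RatFunc E) b' +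
      algebraMap E[X] (RatFunc E) v' / algebraMap E[X] (RatFunc E) k2)
    (hg : ∃ g : RatFunc E,
      f = Dr g + (algebraMap E[X] (RatFunc E) k1 / algebraMap E[X] (RatFunc E) k2) * g + r)
    (hg' : ∃ g' : RatFunc E,
      f = Dr g' + (algebraMap E[X] (RatFunc E) k1 / algebraMap E[X] (RatFunc E) k2) * g' + r') :
    r = r' :=
  stmt_12_general k1 k2 hk2 hdr N hcompl f r r' q b v hb hbk hdeg hv hr q' b' v' hb' hbk' hdeg' hv'
    hr' hg hg'
end
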